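/- Let L and L' be relational first-order languages, let 𝒜 be an L-structure and ℬ an L'-structure, and let (g, f) be a semi-retraction between 𝒜 and ℬ. Let A and B be finite substructures of 𝒜 and let A₀ and B₀ be the substructures of ℬ with underlying sets g(A) and g(B), respectively. Then for every substructure B₀' of ℬ with B₀' ≅ B₀, the following holds: for every substructure C₁ of 𝒜 whose underlying set is contained in the image f(B₀') and which is L-isomorphic to A, the preimage f⁻¹(C₁) is the underlying set of a substructure of ℬ that is L'-isomorphic to A₀. (In the paper's terminology: B₀' has the relational restricted inverse images under f property for A witnessed by A₀.) -/

import Mathlib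

open FirstOrder FirstOrder.Language

/-- Two same-length tuples have the same quantifier-free type over ∅. -/
def SameQfType (L : FirstOrder.Language) (M : Type*) [L.Structure M] {n : ℕ}
    (x y : Fin n → M) : Prop :=
  ∀ φ : L.Formula (Fin n), φ.IsQF → (φ.Realize x ↔ φ.Realize y)

/-- A qftp-respecting injection between structures in possibly different languages. -/
def QftpRespecting (L L' : FirstOrder.Language) (M N : Type*) [L.Structure M] [L'.Structure N]
    (h : M → N) : Prop :=
  Function.Injective h ∧
    ∀ (n : ℕ) (x y : Fin n → M), SameQfType L M x y → SameQfType L' N (h ∘ x) (h ∘ y)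

/-- `(g, f)` is a semi-retraction between `M` and `N`: both maps are qftp-respecting
injections and `f ∘ g` is qftp-preserving (equivalently, an `L`-embedding of `M` into `M`). -/
def IsSemiRetraction (L L' : FirstOrder.Language) (M N : Type*)
    [L.Structure M] [L'.Structure N] (g : M → N) (f : N → M) : Prop :=
  QftpRespecting L L' M N g ∧ QftpRespecting L' L N M f ∧
    ∀ (n : ℕ) (x : Fin n → M), SameQfType L M x (f ∘ g ∘ x)

/-- `M` is locally finite: every finitely generated substructure is finite. -/
def StructLocallyFinite (L : FirstOrder.Language) (M : Type*) [L.Structure M] : Prop :=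
  ∀ S : L.Substructure M, S.FG → (S : Set M).Finite

/-- `M → (B)^A_{r,d}` for substructures. -/
def ArrowSub (L : FirstOrder.Language) (M : Type*) [L.Structure M]
    (A B : L.Substructure M) (r d : ℕ) : Prop :=
  ∀ c : L.Substructure M → Fin r, ∃ B' : L.Substructure M,
    Nonempty (B' ≃[L] B) ∧
      (c '' {A' : L.Substructure M | A' ≤ B' ∧ Nonempty (A' ≃[L] A)}).ncard ≤ d

/-- `M →ᵉ (B)^A_{r,d}` for embeddings. -/
def ArrowEmb (L : FirstOrder.Language) (M : Type*) [L.Structure M]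
    (A B : L.Substructure M) (r d : ℕ) : Prop :=
  ∀ c : (A ↪[L] M) → Fin r, ∃ h : B ↪[L] M,
    (c '' {j : A ↪[L] M | ∃ e : A ↪[L] B, j = h.comp e}).ncard ≤ d

/-- A structure is rigid if its only automorphism is the identity. -/
def IsRigidStructure (L : FirstOrder.Language) (M : Type*) [L.Structure M] : Prop :=
  ∀ σ : M ≃[L] M, ∀ x : M, σ x = x

/-!
The preimage `D = f⁻¹(C₁)` lies in `B₀'`, and `d ↦ g (θ (f d))`, for an isomorphism
`θ : C₁ ≅ A`, is a bijection `D → A₀`. It preserves quantifier-free types: a tuple `d` from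
`B₀'` has the type of a tuple `g b` (transport along `B₀' ≅ B₀ ⊆ g(𝒜)`), so
`f d ∼ f g b ∼ b` and hence `g f d ∼ g b ∼ d`; and `θ` does not change the type of `f d`.
In a relational language a type-preserving bijection is an isomorphism.
-/

open Set

section SameQfType

variable {L : FirstOrder.Language} {M : Type*} [L.Structure M] {n : ℕ}

theorem SameQfType.symm {x y : Fin n → M} (h : SameQfType L M x y) : SameQfType L M y x :=
  fun φ hφ => (h φ hφ).symm

theorem SameQfType.trans {x y z : Fin n → M} (hxy : SameQfType L M x y)
    (hyz : SameQfType L M y z) : SameQfType L M x z :=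
  fun φ hφ => (hxy φ hφ).trans (hyz φ hφ)

theorem SameQfType.relMap_iff {x y : Fin n → M} (h : SameQfType L M x y) (r : L.Relations n) :
    Structure.RelMap r x ↔ Structure.RelMap r y := by
  simpa only [Formula.realize_rel, Term.realize_var] using
    h (r.formula Term.var) (BoundedFormula.IsAtomic.rel r _).isQF

theorem FirstOrder.Language.BoundedFormula.IsQF.realize_formula_embedding
    {N : Type*} [L.Structure N] {α : Type*} {F : Type*} [FunLike F M N] [EmbeddingLike F M N]
    [L.StrongHomClass F M N] {φ : L.Formula α} (hφ : φ.IsQF) (e : F) (v : α → M) :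
    φ.Realize (e ∘ v) ↔ φ.Realize v := by
  have h := hφ.realize_embedding e (v := v) (xs := default)
  rwa [Subsingleton.elim (e ∘ default) default] at h

theorem FirstOrder.Language.Equiv.sameQfType_val_comp {S T : L.Substructure M} (e : S ≃[L] T)
    (x : Fin n → S) : SameQfType L M (Subtype.val ∘ x) (Subtype.val ∘ e ∘ x) := fun _ hφ =>
  (hφ.realize_formula_embedding S.subtype x).trans <|
    (hφ.realize_formula_embedding e x).symm.trans
      (hφ.realize_formula_embedding T.subtype (e ∘ x)).symm

def FirstOrder.Language.Substructure.equivOfSameQfType [L.IsRelational]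
    {S T : L.Substructure M} (e : S ≃ T)
    (he : ∀ (n : ℕ) (x : Fin n → S), SameQfType L M (Subtype.val ∘ x) (Subtype.val ∘ e ∘ x)) :
    S ≃[L] T where
  toEquiv := e
  map_fun' f := isEmptyElim f
  map_rel' r x := ((he _ x).relMap_iff r).symm

end SameQfType

section SemiRetraction

variable {L L' : FirstOrder.Language} {M N : Type*} [L.Structure M] [L'.Structure N]
  {g : M → N} {f : N → M} {n : ℕ}

theorem IsSemiRetraction.sameQfType_comp_comp (hsr : IsSemiRetraction L L' M N g f)
    {d : Fin n → N} {b : Fin n → M} (hdb : SameQfType L' N d (g ∘ b)) :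
    SameQfType L' N d (g ∘ f ∘ d) := by
  obtain ⟨⟨-, hg⟩, ⟨-, hf⟩, hfg⟩ := hsr
  have hfd : SameQfType L M (f ∘ d) b := (hf n _ _ hdb).trans (hfg n b).symm
  exact hdb.trans (hg n _ _ hfd.symm)

theorem IsSemiRetraction.sameQfType_comp_comp_of_mem (hsr : IsSemiRetraction L L' M N g f)
    {S T : L'.Substructure N} (σ : S ≃[L'] T) (hT : (T : Set N) ⊆ range g)
    {d : Fin n → N} (hd : ∀ i, d i ∈ S) : SameQfType L' N d (g ∘ f ∘ d) := by
  let u : Fin n → S := fun i => ⟨d i, hd i⟩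
  choose b hb using fun i => hT (σ (u i)).2
  have hdb : SameQfType L' N d (g ∘ b) := by
    simpa only [Function.comp_def, hb] using σ.sameQfType_val_comp u
  exact hsr.sameQfType_comp_comp hdb

end SemiRetraction

theorem relational_restricted_inverse_images_under_f_general
    {L L' : FirstOrder.Language} [L'.IsRelational]
    {M N : Type*} [L.Structure M] [L'.Structure N]
    (g : M → N) (f : N → M)
    (hsr : IsSemiRetraction L L' M N g f)
    (A B : L.Substructure M)
    (A₀ B₀ : L'.Substructure N)
    (hA₀ : (A₀ : Set N) = g '' (A : Set M)) (hB₀ : (B₀ : Set N) = g '' (B : Set M))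
    (B₀' : L'.Substructure N) (hB₀iso : Nonempty (B₀' ≃[L'] B₀))
    (C₁ : L.Substructure M) (hC₁sub : (C₁ : Set M) ⊆ f '' (B₀' : Set N))
    (hC₁iso : Nonempty (C₁ ≃[L] A)) :
    ∃ A₀' : L'.Substructure N, (A₀' : Set N) = f ⁻¹' (C₁ : Set M) ∧
      Nonempty (A₀' ≃[L'] A₀) := by
  have ⟨⟨hginj, hgqf⟩, ⟨hfinj, _⟩, _⟩ := hsr
  obtain ⟨σ⟩ := hB₀iso
  obtain ⟨θ⟩ := hC₁iso
  have hB₀g : (B₀ : Set N) ⊆ range g := hB₀ ▸ image_subset_range g B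
  have hclosure := Substructure.closure_eq_of_isRelational L' (f ⁻¹' (C₁ : Set M))
  have hpreB₀' : f ⁻¹' (C₁ : Set M) ⊆ B₀' := fun x hx => by
    obtain ⟨y, hy, hfy⟩ := hC₁sub hx
    rwa [← hfinj hfy]
  have hfC₁ : BijOn f (f ⁻¹' C₁) C₁ := by
    simpa only [image_preimage_eq_of_subset (hC₁sub.trans (image_subset_range f B₀'))]
      using hfinj.injOn.bijOn_image (s := f ⁻¹' C₁)
  have hgA : BijOn g A A₀ := hA₀ ▸ hginj.bijOn_image
  let E := (Equiv.setCongr hclosure).trans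
    ((hfC₁.equiv f).trans (θ.toEquiv.trans (hgA.equiv g)))
  refine ⟨_, hclosure, ⟨Substructure.equivOfSameQfType E fun n x => ?_⟩⟩
  have hx : ∀ i, (x i : N) ∈ f ⁻¹' C₁ := fun i =>
    (Substructure.mem_closure_iff_of_isRelational L' _ _).1 (x i).2
  let c : Fin n → C₁ := fun i => ⟨f (x i), hx i⟩
  have hθ : SameQfType L M (f ∘ Subtype.val ∘ x) (Subtype.val ∘ θ ∘ c) :=
    θ.sameQfType_val_comp c
  exact (hsr.sameQfType_comp_comp_of_mem σ hB₀g fun i => hpreB₀' (hx i)).trans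
    (hgqf n _ _ hθ)

/-- Proposition 5.10 / `prop_rlnl_restricted`: for relational languages and a
semi-retraction `(g, f)` between `𝒜` and `ℬ`, with `A, B` finite substructures of `𝒜` and
`A₀, B₀` the substructures of `ℬ` on `g(A), g(B)`, every copy `B₀'` of `B₀` in `ℬ` has the
relational restricted inverse images under `f` property for `A` witnessed by `A₀`. -/
theorem relational_restricted_inverse_images_under_f
    {L L' : FirstOrder.Language} [L.IsRelational] [L'.IsRelational]
    {M N : Type*} [L.Structure M] [L'.Structure N]
    (g : M → N) (f : N → M)
    (hsr : IsSemiRetraction L L' M N g f)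
    (A B : L.Substructure M) (hAfin : (A : Set M).Finite) (hBfin : (B : Set M).Finite)
    (A₀ B₀ : L'.Substructure N)
    (hA₀ : (A₀ : Set N) = g '' (A : Set M)) (hB₀ : (B₀ : Set N) = g '' (B : Set M))
    (B₀' : L'.Substructure N) (hB₀iso : Nonempty (B₀' ≃[L'] B₀))
    (C₁ : L.Substructure M) (hC₁sub : (C₁ : Set M) ⊆ f '' (B₀' : Set N))
    (hC₁iso : Nonempty (C₁ ≃[L] A)) :
    ∃ A₀' : L'.Substructure N, (A₀' : Set N) = f ⁻¹' (C₁ : Set M) ∧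
      Nonempty (A₀' ≃[L'] A₀) :=
  relational_restricted_inverse_images_under_f_general g f hsr A B A₀ B₀ hA₀ hB₀ B₀' hB₀iso C₁
    hC₁sub hC₁iso
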